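/- Let f : ℂ → ℂ be complex-differentiable on an open set U ⊆ ℂ containing the real interval [-1, 1]. Then there exist real constants ρ > 1 and C > 0 such that for every n ≥ 1, the polynomial p_n of degree at most n interpolating f at the n+1 Chebyshev points cos(jπ/n), 0 ≤ j ≤ n, satisfies sup_{x ∈ [-1,1]} |f(x) − p_n(x)| ≤ C · ρ^{−n}; in particular the Chebyshev interpolants of f converge to f uniformly on [-1, 1] at a geometric rate. -/

import Mathlib

open Polynomial Finset Real Set intervalIntegral

/-- The Chebyshev interpolant of degree at most `n` of a function `f : ℂ → ℂ`:
the unique polynomial of degree at most `n` agreeing with `f` at the `n+1`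
Chebyshev points `cos(jπ/n)`, `0 ≤ j ≤ n`, given by the Lagrange interpolation
formula. -/
noncomputable def chebInterpolant (n : ℕ) (f : ℂ → ℂ) : Polynomial ℂ :=
  Lagrange.interpolate (Finset.range (n + 1))
    (fun j : ℕ => ((Real.cos ((j : ℝ) * Real.pi / n) : ℝ) : ℂ))
    (fun j : ℕ => f ((Real.cos ((j : ℝ) * Real.pi / n) : ℝ) : ℂ))

lemma chebT_degree_le : ∀ m : ℕ, (Polynomial.Chebyshev.T ℂ (m : ℤ)).degree ≤ (m : WithBot ℕ)
  | 0 => by simpa [Polynomial.Chebyshev.T_zero] using Polynomial.degree_one_le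
  | 1 => by simpa [Polynomial.Chebyshev.T_one] using Polynomial.degree_X_le
  | (m + 2) => by
    have h1 := chebT_degree_le (m + 1)
    have h0 := chebT_degree_le m
    have : ((m + 2 : ℕ) : ℤ) = (m : ℤ) + 2 := by push_cast; ring
    rw [this, Polynomial.Chebyshev.T_add_two]
    refine le_trans (Polynomial.degree_sub_le _ _) (max_le ?_ ?_)
    · refine le_trans (Polynomial.degree_mul_le _ _) ?_
      have h2 : (2 * Polynomial.X : ℂ[X]).degree ≤ 1 := by
        have e : (2 * Polynomial.X : ℂ[X]) = Polynomial.C 2 * Polynomial.X := by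
          congr 1
        rw [e, Polynomial.degree_C_mul_X (two_ne_zero)]
      calc (2 * Polynomial.X : ℂ[X]).degree + (Polynomial.Chebyshev.T ℂ ((m:ℤ) + 1)).degree
          ≤ 1 + ((m+1 : ℕ) : WithBot ℕ) := by
            refine add_le_add h2 ?_
            exact_mod_cast h1
        _ ≤ ((m + 2 : ℕ) : WithBot ℕ) := by
            have e : ((m + 2 : ℕ) : WithBot ℕ) = 1 + ((m + 1 : ℕ) : WithBot ℕ) := by
              push_cast; ring
            rw [e]
    · exact le_trans h0 (by exact_mod_cast Nat.cast_le.mpr (by omega : m ≤ m + 2))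

lemma nodes_injOn (n : ℕ) (hn : 1 ≤ n) :
    Set.InjOn (fun j : ℕ => ((Real.cos ((j : ℝ) * Real.pi / n) : ℝ) : ℂ))
      (Finset.range (n + 1)) := by
  intro j hj j' hj' h
  simp only [Finset.coe_range, Set.mem_Iio] at hj hj'
  have hn' : (0:ℝ) < n := by exact_mod_cast hn
  have hmem : ∀ i : ℕ, i < n + 1 → (i : ℝ) * π / n ∈ Set.Icc 0 π := by
    intro i hi
    constructor
    · positivity
    · rw [div_le_iff₀ hn']
      have : (i:ℝ) ≤ n := by exact_mod_cast Nat.lt_succ_iff.mp hi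
      nlinarith [Real.pi_pos]
  simp only at h
  have h2 : Real.cos ((j:ℝ) * π / n) = Real.cos ((j':ℝ) * π / n) := by
    exact_mod_cast h
  have h3 := Real.injOn_cos (hmem j hj) (hmem j' hj') h2
  rw [div_left_inj' hn'.ne', mul_left_inj' Real.pi_ne_zero] at h3
  exact_mod_cast h3

def aliasIdx (n k : ℕ) : ℕ := if k % (2*n) ≤ n then k % (2*n) else 2*n - k % (2*n)

lemma aliasIdx_le {n : ℕ} (k : ℕ) (hn : 1 ≤ n) : aliasIdx n k ≤ n := by
  unfold aliasIdx; split <;> omega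

lemma aliasIdx_of_le {n k : ℕ} (hn : 1 ≤ n) (hk : k ≤ n) : aliasIdx n k = k := by
  have h : k % (2*n) = k := Nat.mod_eq_of_lt (by omega)
  unfold aliasIdx; rw [h]; simp [hk]

lemma aliasIdx_cos (n k j : ℕ) (hn : 1 ≤ n) :
    Real.cos ((aliasIdx n k : ℝ) * ((j:ℝ) * π / n)) = Real.cos ((k : ℝ) * ((j:ℝ) * π / n)) := by
  have hn' : (0:ℝ) < n := by exact_mod_cast hn
  set r := k % (2*n) with hr
  set q := k / (2*n) with hq
  have hk : k = 2*n*q + r := by rw [hr, hq]; exact (Nat.div_add_mod k (2*n)).symm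
  have hrlt : r < 2*n := Nat.mod_lt _ (by omega)
  have hsplit : (k : ℝ) * ((j:ℝ) * π / n) = (r:ℝ) * ((j:ℝ) * π / n) + (q*j : ℕ) * (2*π) := by
    rw [hk]; push_cast; field_simp; ring
  rw [hsplit, Real.cos_add_nat_mul_two_pi]
  unfold aliasIdx
  rw [← hr]
  split
  · rfl
  · have hcast : ((2*n - r : ℕ) : ℝ) = 2*(n:ℝ) - r := by
      push_cast [Nat.cast_sub hrlt.le]; ring
    have e : ((2*n - r : ℕ) : ℝ) * ((j:ℝ) * π / n) = (j:ℕ) * (2*π) - (r:ℝ) * ((j:ℝ) * π / n) := by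
      rw [hcast]; field_simp
    rw [e, Real.cos_nat_mul_two_pi_sub]

lemma interpolate_cheb (n : ℕ) (hn : 1 ≤ n) (k : ℕ) :
    Lagrange.interpolate (Finset.range (n + 1))
      (fun j : ℕ => ((Real.cos ((j : ℝ) * Real.pi / n) : ℝ) : ℂ))
      (fun j : ℕ => ((Real.cos ((k : ℝ) * ((j : ℝ) * Real.pi / n)) : ℝ) : ℂ))
      = Polynomial.Chebyshev.T ℂ (aliasIdx n k) := by
  symm
  apply Lagrange.eq_interpolate_of_eval_eq _ (nodes_injOn n hn)
  · rw [Finset.card_range]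
    refine lt_of_le_of_lt (chebT_degree_le _) ?_
    exact_mod_cast Nat.cast_lt (α := WithBot ℕ) |>.mpr (Nat.lt_succ_of_le (aliasIdx_le k hn))
  · intro j hj
    have e1 : ((Real.cos ((j:ℝ) * π / n) : ℝ) : ℂ) = Complex.cos (((j:ℝ) * π / n : ℝ) : ℂ) :=
      (Complex.ofReal_cos _)
    rw [e1, Polynomial.Chebyshev.T_complex_cos]
    have e2 : ((aliasIdx n k : ℤ) : ℂ) * (((j:ℝ) * π / n : ℝ) : ℂ)
        = (((aliasIdx n k : ℝ) * ((j:ℝ) * π / n) : ℝ) : ℂ) := by push_cast; ring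
    rw [e2, ← Complex.ofReal_cos, aliasIdx_cos n k j hn]

lemma strip_mem (U : Set ℂ) (hU : IsOpen U)
    (hsub : (fun x : ℝ => (x : ℂ)) '' Set.Icc (-1:ℝ) 1 ⊆ U) :
    ∃ η : ℝ, 0 < η ∧ ∀ z : ℂ, |z.im| ≤ η → Complex.cos z ∈ U := by
  set A : Set (ℝ × ℝ) := (fun p : ℝ × ℝ => Complex.cos (p.1 + p.2 * Complex.I)) ⁻¹' U with hA
  have hAopen : IsOpen A := by
    refine IsOpen.preimage ?_ hU
    exact Complex.continuous_cos.comp (by continuity)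
  have hK : IsCompact ((Set.Icc (0:ℝ) (2*π)) ×ˢ ({0} : Set ℝ)) :=
    isCompact_Icc.prod isCompact_singleton
  have hKA : (Set.Icc (0:ℝ) (2*π)) ×ˢ ({0} : Set ℝ) ⊆ A := by
    rintro ⟨x, y⟩ ⟨hx, hy⟩
    simp only [Set.mem_singleton_iff] at hy
    subst hy
    show Complex.cos ((x:ℂ) + (0:ℝ) * Complex.I) ∈ U
    rw [show ((x:ℂ) + (0:ℝ) * Complex.I) = (x:ℂ) by push_cast; ring, ← Complex.ofReal_cos]
    exact hsub ⟨Real.cos x, ⟨Real.neg_one_le_cos x, Real.cos_le_one x⟩, rfl⟩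
  obtain ⟨δ, hδ, hth⟩ := hK.exists_thickening_subset_open hAopen hKA
  refine ⟨δ/2, by positivity, ?_⟩
  intro z hz
  set m : ℤ := ⌊z.re / (2*π)⌋ with hm
  set x' : ℝ := z.re - 2*π*m with hx'
  have h2π : (0:ℝ) < 2*π := Real.two_pi_pos
  have hx'mem : x' ∈ Set.Icc 0 (2*π) := by
    constructor
    · have := Int.floor_le (z.re / (2*π))
      rw [hx']
      nlinarith [(le_div_iff₀ h2π).mp this]
    · have := Int.lt_floor_add_one (z.re / (2*π))
      rw [hx']
      nlinarith [(div_lt_iff₀ h2π).mp this]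
  have hmemth : (x', z.im) ∈ Metric.thickening δ ((Set.Icc (0:ℝ) (2*π)) ×ˢ ({0} : Set ℝ)) := by
    rw [Metric.mem_thickening_iff]
    refine ⟨(x', 0), ⟨hx'mem, rfl⟩, ?_⟩
    have : dist ((x' : ℝ), z.im) ((x' : ℝ), (0:ℝ)) = |z.im| := by
      rw [Prod.dist_eq]
      simp [Real.dist_eq]
    rw [this]
    exact lt_of_le_of_lt hz (half_lt_self hδ)
  have hmemA : (x', z.im) ∈ A := hth hmemth
  have : Complex.cos ((x':ℂ) + (z.im:ℂ) * Complex.I) ∈ U := hmemA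
  have hper : Complex.cos z = Complex.cos ((x':ℂ) + (z.im:ℂ) * Complex.I) := by
    have hx'c : (x' : ℂ) = (z.re : ℂ) - 2*(π:ℂ)*(m:ℂ) := by
      rw [hx']; push_cast; ring
    have hz' : z = ((x':ℂ) + (z.im:ℂ) * Complex.I) + (m : ℤ) * (2*(π:ℂ)) := by
      rw [hx'c]
      conv_lhs => rw [← Complex.re_add_im z]
      push_cast
      ring
    conv_lhs => rw [hz']
    exact Complex.cos_periodic.int_mul m _
  rwa [hper]

lemma coeff_decay (g : ℂ → ℂ) (V : Set ℂ) (η : ℝ) (hη : 0 < η)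
    (hstrip : ∀ z : ℂ, |z.im| ≤ η → z ∈ V) (hg : DifferentiableOn ℂ g V)
    (hper : ∀ z : ℂ, g (z + 2*(π:ℂ)) = g z) (M : ℝ)
    (hM : ∀ z : ℂ, z.im ∈ Set.Icc (-η) (0:ℝ) → ‖g z‖ ≤ M) (k : ℕ) :
    ‖∫ θ in (0:ℝ)..(2*π), Complex.exp (-(k:ℂ) * θ * Complex.I) * g θ‖
      ≤ 2*π * (M * Real.exp (-η * k)) := by
  set F : ℂ → ℂ := fun z => Complex.exp (-(k:ℂ) * z * Complex.I) * g z with hF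
  have hFdiff : DifferentiableOn ℂ F V := by
    apply DifferentiableOn.mul _ hg
    apply Differentiable.differentiableOn
    apply Complex.differentiable_exp.comp
    fun_prop
  have key := Complex.integral_boundary_rect_eq_zero_of_differentiableOn F
    (⟨0, -η⟩ : ℂ) (⟨2*π, 0⟩ : ℂ) ?rect
  case rect =>
    apply hFdiff.mono
    rintro z ⟨-, hzim⟩
    apply hstrip
    have h1 : Set.uIcc (Complex.mk 0 (-η)).im (Complex.mk (2*π) 0).im = Set.Icc (-η) 0 :=
      Set.uIcc_of_le (show (-η:ℝ) ≤ 0 by linarith)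
    rw [h1] at hzim
    rw [abs_le]; exact ⟨hzim.1, le_trans hzim.2 hη.le⟩
  -- vertical sides cancel
  have hvert : ∀ y : ℝ, F ((⟨2*π, 0⟩ : ℂ).re + y * Complex.I) = F ((⟨0, -η⟩ : ℂ).re + y * Complex.I) := by
    intro y
    show F ((2*π : ℝ) + y * Complex.I) = F ((0:ℝ) + y * Complex.I)
    have harg : ((2*π : ℝ) : ℂ) + y * Complex.I = (((0:ℝ):ℂ) + y * Complex.I) + 2*(π:ℂ) := by
      push_cast; ring
    rw [hF]
    simp only [harg, hper]
    congr 1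
    rw [show -(k:ℂ) * ((((0:ℝ):ℂ) + y * Complex.I) + 2*(π:ℂ)) * Complex.I
        = -(k:ℂ) * (((0:ℝ):ℂ) + y * Complex.I) * Complex.I
          + (Int.cast (-(k:ℤ)) : ℂ) * (2*(π:ℂ)*Complex.I) by push_cast; ring]
    rw [Complex.exp_add, Complex.exp_int_mul_two_pi_mul_I, mul_one]
  have hvint : (∫ y in (⟨0,-η⟩ : ℂ).im..(⟨2*π,0⟩ : ℂ).im, F ((⟨2*π,0⟩ : ℂ).re + y * Complex.I))
      = ∫ y in (⟨0,-η⟩ : ℂ).im..(⟨2*π,0⟩ : ℂ).im, F ((⟨0,-η⟩ : ℂ).re + y * Complex.I) :=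
    intervalIntegral.integral_congr (fun y _ => hvert y)
  rw [hvint] at key
  have hkey2 : (∫ x in (0:ℝ)..(2*π), F (x + (-η : ℝ) * Complex.I))
      = ∫ x in (0:ℝ)..(2*π), F (x + (0:ℝ) * Complex.I) := by
    have := key
    simp only [smul_eq_mul] at this
    linear_combination this
  have horig : (∫ θ in (0:ℝ)..(2*π), Complex.exp (-(k:ℂ) * θ * Complex.I) * g θ)
      = ∫ x in (0:ℝ)..(2*π), F (x + (-η : ℝ) * Complex.I) := by
    refine Eq.trans ?_ hkey2.symm
    refine intervalIntegral.integral_congr (fun x _ => ?_)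
    rw [hF]
    norm_num
  rw [horig]
  have hbound : ∀ x ∈ Set.uIoc (0:ℝ) (2*π), ‖F (x + (-η : ℝ) * Complex.I)‖ ≤ M * Real.exp (-η * k) := by
    intro x _
    rw [hF]
    simp only [norm_mul]
    have hre : (-(k:ℂ) * ((x:ℂ) + ((-η:ℝ):ℂ) * Complex.I) * Complex.I).re = -η * k := by
      simp [Complex.mul_re, Complex.mul_im]
      ring
    have h1 : ‖Complex.exp (-(k:ℂ) * ((x:ℂ) + ((-η:ℝ):ℂ) * Complex.I) * Complex.I)‖
        = Real.exp (-η * k) := by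
      rw [Complex.norm_exp, hre]
    rw [h1, mul_comm]
    apply mul_le_mul_of_nonneg_right _ (Real.exp_nonneg _)
    apply hM
    constructor <;> simp [hη.le]
  have := intervalIntegral.norm_integral_le_of_norm_le_const hbound
  calc ‖∫ x in (0:ℝ)..(2*π), F (x + (-η : ℝ) * Complex.I)‖
      ≤ M * Real.exp (-η * k) * |2*π - 0| := this
    _ = 2*π * (M * Real.exp (-η * k)) := by
        rw [sub_zero, abs_of_pos Real.two_pi_pos]; ring

lemma fourier_setup (g : ℂ → ℂ) (V : Set ℂ) (hV : IsOpen V) (η : ℝ) (hη : 0 < η)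
    (hstrip : ∀ z : ℂ, |z.im| ≤ η → z ∈ V) (hg : DifferentiableOn ℂ g V)
    (hper : ∀ z : ℂ, g (z + 2*(π:ℂ)) = g z)
    (heven : ∀ z : ℂ, g (-z) = g z) (M : ℝ)
    (hM : ∀ z : ℂ, |z.im| ≤ η → ‖g z‖ ≤ M) :
    ∃ c : ℕ → ℂ, (∀ k : ℕ, ‖c k‖ ≤ M * Real.exp (-η * k)) ∧
      ∀ t : ℝ, t ∈ Set.Ico 0 (2*π) →
        HasSum (fun k : ℕ => 2 * c k * ((Real.cos ((k:ℝ) * t) : ℝ) : ℂ))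
          (g (t : ℂ) + c 0) := by
  haveI : Fact (0 < 2*π) := ⟨Real.two_pi_pos⟩
  set gr : ℝ → ℂ := fun θ => g θ with hgr
  have hgcont : ContinuousOn g V := hg.continuousOn
  have hgrc : Continuous gr := by
    rw [continuous_iff_continuousAt]
    intro θ
    exact (hgcont.continuousAt (hV.mem_nhds (hstrip _ (by simp [hη.le])))).comp
      Complex.continuous_ofReal.continuousAt
  have hper' : ∀ t : ℝ, gr (t + 2*π) = gr t := by
    intro t; rw [hgr]; simp only []
    rw [show ((t + 2*π : ℝ) : ℂ) = (t:ℂ) + 2*(π:ℂ) by push_cast; ring]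
    exact hper _
  set G : C(AddCircle (2*π), ℂ) :=
    ⟨AddCircle.liftIco (2*π) 0 gr,
      AddCircle.liftIco_continuous ((hper' 0).symm) hgrc.continuousOn⟩ with hG
  have hGcoe : ∀ t : ℝ, t ∈ Set.Ico (0:ℝ) (2*π) → G ↑t = gr t := by
    intro t ht
    exact AddCircle.liftIco_zero_coe_apply (f := gr) ht
  have hGcoe' : ∀ t : ℝ, t ∈ Set.Icc (0:ℝ) (2*π) → G ↑t = gr t := by
    intro t ht
    rcases eq_or_lt_of_le ht.2 with h | h
    · subst h
      have h0 : ((2*π : ℝ) : AddCircle (2*π)) = ((0:ℝ) : AddCircle (2*π)) := by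
        have : ((0 + 2*π : ℝ) : AddCircle (2*π)) = ((0:ℝ) : AddCircle (2*π)) :=
          AddCircle.coe_add_period (2*π) 0
        simpa using this
      rw [h0, hGcoe 0 ⟨le_refl _, Real.two_pi_pos⟩, ← hper' 0, zero_add]
    · exact hGcoe t ⟨ht.1, h⟩
  set cz : ℤ → ℂ := fourierCoeff (G : AddCircle (2*π) → ℂ) with hcz
  have hfourier : ∀ (k : ℤ) (t : ℝ),
      fourier k ((t : ℝ) : AddCircle (2*π)) = Complex.exp ((k:ℂ) * t * Complex.I) := by
    intro k t
    rw [fourier_coe_apply]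
    congr 1
    have hπ : (π:ℂ) ≠ 0 := Complex.ofReal_ne_zero.mpr Real.pi_ne_zero
    push_cast
    field_simp
  have hcf : ∀ k : ℤ, cz k
      = (1/(2*π) : ℝ) • ∫ θ in (0:ℝ)..(2*π), Complex.exp (-(k:ℂ) * θ * Complex.I) * gr θ := by
    intro k
    rw [hcz, fourierCoeff_eq_intervalIntegral (G : AddCircle (2*π) → ℂ) k 0]
    congr 1
    rw [zero_add]
    refine intervalIntegral.integral_congr (fun x hx => ?_)
    rw [Set.uIcc_of_le (by positivity : (0:ℝ) ≤ 2*π)] at hx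
    rw [hGcoe' x hx, hfourier (-k) x, smul_eq_mul]
    push_cast
    ring_nf
  have hceven : ∀ k : ℤ, cz (-k) = cz k := by
    intro k
    rw [hcf, hcf]
    congr 1
    have hsub := intervalIntegral.integral_comp_sub_left
      (fun θ : ℝ => Complex.exp (-(k:ℂ) * θ * Complex.I) * gr θ) (2*π) (a := 0) (b := 2*π)
    rw [sub_self, sub_zero] at hsub
    rw [← hsub]
    refine intervalIntegral.integral_congr (fun x hx => ?_)
    have h1 : gr (2*π - x) = gr x := by
      rw [show (2*π - x : ℝ) = -x + 2*π by ring, hper' (-x), hgr]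
      simp only []
      rw [show ((-x:ℝ):ℂ) = -(x:ℂ) by push_cast; ring, heven]
    rw [h1]
    congr 1
    rw [show -(k:ℂ) * ((2*π - x : ℝ):ℂ) * Complex.I
        = -((-k:ℤ):ℂ) * (x:ℂ) * Complex.I + (Int.cast (-(k:ℤ)) : ℂ) * (2*(π:ℂ)*Complex.I) by
      push_cast; ring]
    rw [Complex.exp_add, Complex.exp_int_mul_two_pi_mul_I, mul_one]
  have hdecay : ∀ k : ℕ, ‖cz k‖ ≤ M * Real.exp (-η * k) := by
    intro k
    rw [hcf]
    have hint := coeff_decay g V η hη hstrip hg hper M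
      (fun z hz => hM z (abs_le.mpr ⟨hz.1, le_trans hz.2 hη.le⟩)) k
    have e : ∫ θ in (0:ℝ)..(2*π), Complex.exp (-((k:ℕ):ℤ) * θ * Complex.I) * gr θ
        = ∫ θ in (0:ℝ)..(2*π), Complex.exp (-(k:ℂ) * θ * Complex.I) * g θ := by
      refine intervalIntegral.integral_congr (fun x hx => ?_)
      push_cast
      rfl
    rw [e]
    rw [norm_smul]
    have h2 : ‖(1/(2*π) : ℝ)‖ = 1/(2*π) := by
      rw [Real.norm_eq_abs, abs_of_pos (by positivity)]
    rw [h2]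
    calc 1/(2*π) * ‖∫ θ in (0:ℝ)..(2*π), Complex.exp (-(k:ℂ) * θ * Complex.I) * g θ‖
        ≤ 1/(2*π) * (2*π * (M * Real.exp (-η * k))) := by
          apply mul_le_mul_of_nonneg_left hint (by positivity)
      _ = M * Real.exp (-η * k) := by field_simp
  have hsummable : Summable cz := by
    have hnat : Summable (fun n : ℕ => cz n) := by
      apply Summable.of_norm_bounded (Summable.mul_left M
        (summable_geometric_of_lt_one (Real.exp_nonneg _)
        (Real.exp_lt_one_iff.mpr (by linarith : -η < 0))))
      intro n
      calc ‖cz n‖ ≤ M * Real.exp (-η * n) := hdecay n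
        _ = M * (Real.exp (-η))^n := by rw [← Real.exp_nat_mul]; ring_nf
    have hneg : Summable (fun n : ℕ => cz (-n)) := by
      apply Summable.congr hnat
      intro n
      rw [hceven]
    exact Summable.of_nat_of_neg hnat hneg
  refine ⟨fun k : ℕ => cz k, hdecay, ?_⟩
  intro t ht
  have hps := has_pointwise_sum_fourier_series_of_summable (f := G) hsummable ((t : ℝ) : AddCircle (2*π))
  have hps' : HasSum (fun i : ℤ => cz i * Complex.exp ((i:ℂ) * t * Complex.I)) (g (t:ℂ)) := by
    have e : ∀ i : ℤ, fourierCoeff (G : AddCircle (2*π) → ℂ) i • fourier i ((t : ℝ) : AddCircle (2*π))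
        = cz i * Complex.exp ((i:ℂ) * t * Complex.I) := by
      intro i
      rw [hfourier i t, smul_eq_mul, hcz]
    rw [show g (t:ℂ) = G ((t:ℝ) : AddCircle (2*π)) from (hGcoe t ht).symm]
    have efun : (fun i : ℤ => fourierCoeff (G : AddCircle (2*π) → ℂ) i • fourier i ((t : ℝ) : AddCircle (2*π)))
        = (fun i : ℤ => cz i * Complex.exp ((i:ℂ) * t * Complex.I)) := funext e
    rw [efun] at hps
    exact hps
  have h2 := hps'.nat_add_neg
  simp only [Int.cast_zero, zero_mul, Complex.exp_zero, mul_one] at h2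
  have efun2 : (fun n : ℕ => cz (n:ℤ) * Complex.exp (((n:ℤ):ℂ) * t * Complex.I)
        + cz (-(n:ℤ)) * Complex.exp ((Int.cast (-(n:ℤ)) : ℂ) * t * Complex.I))
      = (fun n : ℕ => 2 * cz n * ((Real.cos ((n:ℝ) * t) : ℝ) : ℂ)) := by
    funext n
    rw [hceven n]
    have e1 : (Int.cast (-(n:ℤ)) : ℂ) * t * Complex.I = -(((n:ℝ) * t : ℝ):ℂ) * Complex.I := by
      push_cast; ring
    have e2 : ((n:ℤ):ℂ) * t * Complex.I = (((n:ℝ) * t : ℝ):ℂ) * Complex.I := by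
      push_cast; ring
    rw [e1, e2, ← mul_add, ← Complex.two_cos, ← Complex.ofReal_cos]
    ring
  rw [efun2] at h2
  exact h2



lemma eval_interpolate_sum {s : Finset ℕ} {v : ℕ → ℂ} (r : ℕ → ℂ) (x : ℂ) :
    Polynomial.eval x (Lagrange.interpolate s v r)
      = ∑ j ∈ s, r j * Polynomial.eval x (Lagrange.basis s v j) := by
  rw [Lagrange.interpolate_apply, Polynomial.eval_finset_sum]
  simp [Polynomial.eval_mul]

/-- If `f : ℂ → ℂ` is complex-differentiable on an open set `U` containing the
real interval `[-1, 1]`, then there exist `ρ > 1` and `C > 0` such that for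
every `n ≥ 1` the Chebyshev interpolant `p_n` of `f` satisfies
`sup_{x ∈ [-1,1]} |f(x) − p_n(x)| ≤ C ρ⁻ⁿ`: geometric uniform convergence. -/
theorem chebyshev_interpolation_geometric_convergence_of_analytic
    (f : ℂ → ℂ) (U : Set ℂ) (hU : IsOpen U)
    (hsub : (fun x : ℝ => (x : ℂ)) '' Set.Icc (-1 : ℝ) 1 ⊆ U)
    (hf : DifferentiableOn ℂ f U) :
    ∃ ρ : ℝ, 1 < ρ ∧ ∃ C : ℝ, 0 < C ∧
      ∀ n : ℕ, 1 ≤ n → ∀ x : ℝ, x ∈ Set.Icc (-1 : ℝ) 1 →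
        ‖f (x : ℂ) - (chebInterpolant n f).eval (x : ℂ)‖ ≤
          C * ρ ^ (-(n : ℝ)) := by
  obtain ⟨η, hη, hstrip⟩ := strip_mem U hU hsub
  set g : ℂ → ℂ := fun z => f (Complex.cos z) with hgdef
  set V : Set ℂ := Complex.cos ⁻¹' U with hV
  have hVopen : IsOpen V := hU.preimage Complex.continuous_cos
  have hgV : DifferentiableOn ℂ g V :=
    hf.comp Complex.differentiable_cos.differentiableOn (Set.mapsTo_preimage _ _)
  have hstripV : ∀ z : ℂ, |z.im| ≤ η → z ∈ V := fun z hz => hstrip z hz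
  have hper : ∀ z : ℂ, g (z + 2*(π:ℂ)) = g z := by
    intro z; rw [hgdef]; simp only []
    rw [Complex.cos_add_two_pi]
  have heven : ∀ z : ℂ, g (-z) = g z := by
    intro z; rw [hgdef]; simp only []
    rw [Complex.cos_neg]
  -- bound on the strip via compactness and periodicity
  obtain ⟨M, hMbound⟩ : ∃ M : ℝ, ∀ z : ℂ, |z.im| ≤ η → ‖g z‖ ≤ M := by
    set K : Set ℂ := Set.Icc (0:ℝ) (2*π) ×ℂ Set.Icc (-η) η with hK
    have hKcomp : IsCompact K := by
      apply Metric.isCompact_of_isClosed_isBounded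
      · exact isClosed_Icc.reProdIm isClosed_Icc
      · exact Bornology.IsBounded.reProdIm (Metric.isBounded_Icc _ _) (Metric.isBounded_Icc _ _)
    have hKV : K ⊆ V := by
      rintro z ⟨-, hzim⟩
      exact hstripV z (abs_le.mpr ⟨(hzim : z.im ∈ Set.Icc (-η) η).1, hzim.2⟩)
    obtain ⟨M, hM⟩ := hKcomp.exists_bound_of_continuousOn (hgV.continuousOn.mono hKV)
    refine ⟨M, ?_⟩
    intro z hz
    set m : ℤ := ⌊z.re / (2*π)⌋ with hm
    have h2π : (0:ℝ) < 2*π := Real.two_pi_pos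
    set z' : ℂ := z - (m:ℂ) * (2*(π:ℂ)) with hz'
    have hz're : z'.re = z.re - 2*π*m := by
      rw [hz']; simp [Complex.sub_re, Complex.mul_re]; ring
    have hz'im : z'.im = z.im := by
      rw [hz']; simp [Complex.sub_im, Complex.mul_im]
    have hz'K : z' ∈ K := by
      constructor
      · show z'.re ∈ Set.Icc (0:ℝ) (2*π)
        rw [hz're]
        constructor
        · have := Int.floor_le (z.re / (2*π))
          nlinarith [(le_div_iff₀ h2π).mp this]
        · have := Int.lt_floor_add_one (z.re / (2*π))
          nlinarith [(div_lt_iff₀ h2π).mp this]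
      · show z'.im ∈ Set.Icc (-η) η
        rw [hz'im]
        exact abs_le.mp hz
    have hgz : g z = g z' := by
      rw [hgdef]; simp only []
      congr 1
      have : z = z' + (m:ℂ) * (2*(π:ℂ)) := by rw [hz']; ring
      rw [this]
      exact Complex.cos_periodic.int_mul m z'
    rw [hgz]
    exact hM z' hz'K
  have hM0 : 0 ≤ M := le_trans (norm_nonneg _) (hMbound 0 (by simp [hη.le]))
  obtain ⟨c, hcb, hkey⟩ := fourier_setup g V hVopen η hη hstripV hgV hper heven M hMbound
  set r : ℝ := Real.exp (-η) with hr
  have hr0 : 0 < r := Real.exp_pos _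
  have hr1 : r < 1 := Real.exp_lt_one_iff.mpr (by linarith)
  have hr1' : (0:ℝ) < 1 - r := by linarith
  refine ⟨Real.exp η, Real.one_lt_exp_iff.mpr hη, 4*(M+1)/(1-r), by positivity, ?_⟩
  intro n hn x hx
  set t : ℝ := Real.arccos x with htdef
  have ht0 : 0 ≤ t := Real.arccos_nonneg x
  have htπ : t ≤ π := Real.arccos_le_pi x
  have hcos : Real.cos t = x := Real.cos_arccos hx.1 hx.2
  have hπ2π : π < 2*π := by nlinarith [Real.pi_pos]
  have htIco : t ∈ Set.Ico (0:ℝ) (2*π) := ⟨ht0, lt_of_le_of_lt htπ hπ2π⟩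
  set s : Finset ℕ := Finset.range (n+1) with hs
  set v : ℕ → ℂ := fun j : ℕ => ((Real.cos ((j : ℝ) * Real.pi / n) : ℝ) : ℂ) with hv
  set b : ℕ → ℂ := fun j => Polynomial.eval ((x:ℝ):ℂ) (Lagrange.basis s v j) with hb
  -- A: the function side
  have hgt : g ((t:ℝ):ℂ) = f ((x:ℝ):ℂ) := by
    rw [hgdef]; simp only []
    rw [← Complex.ofReal_cos, hcos]
  have hA : HasSum (fun k : ℕ => 2 * c k * ((Real.cos ((k:ℝ) * t) : ℝ) : ℂ))
      (f ((x:ℝ):ℂ) + c 0) := by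
    have := hkey t htIco
    rwa [hgt] at this
  -- B: the interpolant side
  have hn' : (0:ℝ) < n := by exact_mod_cast hn
  have hBj : ∀ j ∈ s, HasSum
      (fun k : ℕ => (2 * c k * ((Real.cos ((k:ℝ) * ((j:ℝ) * π / n)) : ℝ) : ℂ)) * b j)
      ((f (v j) + c 0) * b j) := by
    intro j hj
    have hjn : j ≤ n := by
      rw [hs] at hj; exact Nat.lt_succ_iff.mp (Finset.mem_range.mp hj)
    have htj : ((j:ℝ) * π / n) ∈ Set.Ico (0:ℝ) (2*π) := by
      constructor
      · positivity
      · refine lt_of_le_of_lt ?_ hπ2π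
        rw [div_le_iff₀ hn']
        have : (j:ℝ) ≤ n := by exact_mod_cast hjn
        nlinarith [Real.pi_pos]
    have h1 := (hkey _ htj).mul_right (b j)
    have h2 : g (((j:ℝ) * π / n : ℝ):ℂ) = f (v j) := by
      rw [hgdef, hv]; simp only []
      rw [← Complex.ofReal_cos]
    rwa [h2] at h1
  have hsumB := hasSum_sum hBj
  -- identify the sums
  have hE1 : ∀ k : ℕ, (∑ j ∈ s, (2 * c k * ((Real.cos ((k:ℝ) * ((j:ℝ) * π / n)) : ℝ) : ℂ)) * b j)
      = 2 * c k * ((Real.cos ((aliasIdx n k : ℝ) * t) : ℝ) : ℂ) := by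
    intro k
    have e1 : (∑ j ∈ s, (2 * c k * ((Real.cos ((k:ℝ) * ((j:ℝ) * π / n)) : ℝ) : ℂ)) * b j)
        = 2 * c k * ∑ j ∈ s, ((Real.cos ((k:ℝ) * ((j:ℝ) * π / n)) : ℝ) : ℂ) * b j := by
      rw [Finset.mul_sum]; congr 1; funext j; ring
    rw [e1]
    congr 1
    rw [hb]
    have e2 := (eval_interpolate_sum (s := s) (v := v)
      (fun j : ℕ => ((Real.cos ((k : ℝ) * ((j : ℝ) * Real.pi / n)) : ℝ) : ℂ)) ((x:ℝ):ℂ)).symm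
    rw [e2, hs, hv, interpolate_cheb n hn k]
    have hx' : ((x:ℝ):ℂ) = Complex.cos ((t:ℝ):ℂ) := by
      rw [← Complex.ofReal_cos, hcos]
    rw [hx', Polynomial.Chebyshev.T_complex_cos]
    rw [show ((aliasIdx n k : ℤ):ℂ) * ((t:ℝ):ℂ) = (((aliasIdx n k : ℝ) * t : ℝ):ℂ) by
      push_cast; ring]
    rw [← Complex.ofReal_cos]
  have hE2 : (∑ j ∈ s, (f (v j) + c 0) * b j)
      = Polynomial.eval ((x:ℝ):ℂ) (chebInterpolant n f) + c 0 := by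
    have e1 : (∑ j ∈ s, (f (v j) + c 0) * b j)
        = (∑ j ∈ s, f (v j) * b j) + c 0 * ∑ j ∈ s, b j := by
      rw [Finset.mul_sum, ← Finset.sum_add_distrib]; congr 1; funext j; ring
    have e2 : (∑ j ∈ s, f (v j) * b j) = Polynomial.eval ((x:ℝ):ℂ) (chebInterpolant n f) := by
      rw [chebInterpolant, ← hs, ← hv]
      rw [eval_interpolate_sum (fun j : ℕ => f (v j)) ((x:ℝ):ℂ)]
    have e3 : (∑ j ∈ s, b j) = 1 := by
      have e4 : (∑ j ∈ s, b j)
          = ∑ j ∈ s, ((Real.cos (((0:ℕ) : ℝ) * ((j : ℝ) * Real.pi / n)) : ℝ) : ℂ) * b j := by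
        refine Finset.sum_congr rfl (fun j _ => ?_)
        norm_num
      rw [e4]
      simp only [hb]
      have e5 := (eval_interpolate_sum (s := s) (v := v)
        (fun j : ℕ => ((Real.cos (((0:ℕ) : ℝ) * ((j : ℝ) * Real.pi / n)) : ℝ) : ℂ)) ((x:ℝ):ℂ)).symm
      rw [e5, hs, hv, interpolate_cheb n hn 0, aliasIdx_of_le hn (Nat.zero_le n)]
      show Polynomial.eval _ (Polynomial.Chebyshev.T ℂ ((0:ℕ):ℤ)) = 1
      norm_num [Polynomial.Chebyshev.T_zero]
    rw [e1, e2, e3, mul_one]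
  rw [funext hE1, hE2] at hsumB
  -- subtract
  have hdiff := hA.sub hsumB
  have hval : (f ((x:ℝ):ℂ) + c 0) - (Polynomial.eval ((x:ℝ):ℂ) (chebInterpolant n f) + c 0)
      = f ((x:ℝ):ℂ) - Polynomial.eval ((x:ℝ):ℂ) (chebInterpolant n f) := by ring
  rw [hval] at hdiff
  set u : ℕ → ℝ := fun k => if k ≤ n then 0 else 4*M*r^k with hu
  have hterm : ∀ k : ℕ, ‖(2 * c k * ((Real.cos ((k:ℝ) * t) : ℝ) : ℂ))
      - (2 * c k * ((Real.cos ((aliasIdx n k : ℝ) * t) : ℝ) : ℂ))‖ ≤ u k := by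
    intro k
    rw [hu]
    by_cases hk : k ≤ n
    · simp only [hk, if_true]
      rw [aliasIdx_of_le hn hk]
      simp
    · simp only [hk, if_false]
      have e : (2 * c k * ((Real.cos ((k:ℝ) * t) : ℝ) : ℂ))
          - (2 * c k * ((Real.cos ((aliasIdx n k : ℝ) * t) : ℝ) : ℂ))
          = 2 * c k * (((Real.cos ((k:ℝ) * t) : ℝ) : ℂ) - ((Real.cos ((aliasIdx n k : ℝ) * t) : ℝ) : ℂ)) := by
        ring
      rw [e]
      rw [norm_mul, norm_mul]
      have h1 : ‖(2:ℂ)‖ = 2 := by norm_num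
      have h2 : ‖c k‖ ≤ M * r^k := by
        calc ‖c k‖ ≤ M * Real.exp (-η * k) := hcb k
          _ = M * r^k := by rw [hr, ← Real.exp_nat_mul]; ring_nf
      have h3 : ‖((Real.cos ((k:ℝ) * t) : ℝ) : ℂ) - ((Real.cos ((aliasIdx n k : ℝ) * t) : ℝ) : ℂ)‖ ≤ 2 := by
        refine le_trans (norm_sub_le _ _) ?_
        rw [Complex.norm_real, Complex.norm_real, Real.norm_eq_abs, Real.norm_eq_abs]
        have := Real.abs_cos_le_one ((k:ℝ) * t)
        have := Real.abs_cos_le_one ((aliasIdx n k : ℝ) * t)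
        linarith
      rw [h1]
      calc 2 * ‖c k‖ * ‖((Real.cos ((k:ℝ) * t) : ℝ) : ℂ) - ((Real.cos ((aliasIdx n k : ℝ) * t) : ℝ) : ℂ)‖
          ≤ 2 * (M * r^k) * 2 := by
            apply mul_le_mul _ h3 (norm_nonneg _) (by positivity)
            apply mul_le_mul_of_nonneg_left h2 (by norm_num)
        _ = 4*M*r^k := by ring
  have husum : Summable u := by
    apply Summable.of_nonneg_of_le (fun k => ?_) (fun k => ?_)
      ((summable_geometric_of_lt_one hr0.le hr1).mul_left (4*M))
    · rw [hu]; dsimp only; split <;> positivity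
    · rw [hu]; dsimp only; split
      · positivity
      · exact le_refl _
  have hnorm := tsum_of_norm_bounded husum.hasSum hterm
  rw [hdiff.tsum_eq] at hnorm
  -- bound the tail sum
  have htail : (∑' k, u k) ≤ 4*(M+1)/(1-r) * r^n := by
    have hshift : Summable (fun k => u (k + (n+1))) := by
      apply husum.comp_injective (add_left_injective (n+1))
    have hsplit := Summable.sum_add_tsum_nat_add' (k := n+1) hshift
    have hzero : (∑ i ∈ Finset.range (n+1), u i) = 0 := by
      apply Finset.sum_eq_zero
      intro i hi
      rw [hu]; simp [Nat.lt_succ_iff.mp (Finset.mem_range.mp hi)]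
    have hufun : (fun k => u (k + (n+1))) = fun k => (4*M*r^(n+1)) * r^k := by
      funext k
      rw [hu]; simp only []
      rw [if_neg (by omega)]
      rw [pow_add]
      ring
    have htsum : (∑' k, u (k + (n+1))) = (4*M*r^(n+1)) * (1-r)⁻¹ := by
      rw [hufun, tsum_mul_left, tsum_geometric_of_lt_one hr0.le hr1]
    have : (∑' k, u k) = (4*M*r^(n+1)) * (1-r)⁻¹ := by
      rw [← hsplit, hzero, zero_add, htsum]
    rw [this]
    have h1r : 0 < 1 - r := by linarith
    rw [div_mul_eq_mul_div, mul_comm ((4*(M+1))) (r^n)]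
    rw [le_div_iff₀ h1r]
    have : (4*M*r^(n+1)) * (1-r)⁻¹ * (1-r) = 4*M*r^(n+1) := by
      field_simp
    rw [this]
    have hrpow : r^(n+1) ≤ r^n := by
      rw [pow_succ]
      nlinarith [pow_nonneg hr0.le n, pow_le_one₀ hr0.le hr1.le (n := n)]
    nlinarith [pow_nonneg hr0.le n, pow_nonneg hr0.le (n+1)]
  -- convert ρ^(-n) to r^n
  have hρ : (Real.exp η) ^ (-(n:ℝ)) = r^n := by
    rw [Real.rpow_neg (Real.exp_pos η).le, Real.rpow_natCast]
    rw [← inv_pow, ← Real.exp_neg]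
  rw [hρ]
  calc ‖f ((x:ℝ):ℂ) - (chebInterpolant n f).eval ((x:ℝ):ℂ)‖
      = ‖f ((x:ℝ):ℂ) - Polynomial.eval ((x:ℝ):ℂ) (chebInterpolant n f)‖ := by
        rfl
    _ ≤ ∑' k, u k := hnorm
    _ ≤ 4*(M+1)/(1-r) * r^n := htail
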